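/- For x > π/2, the first component of the solution satisfies the integral equation ψ_1(x,μ) = σ^+ cos(μx − θ) + σ^− cos(μ(π−x) − θ) − ∫_0^{π/2} (σ^+ sin(μ(t−x)) + σ^− sin(μ(x+t−π))) ψ_1(t,μ) p(t) dt + ∫_0^{π/2} (σ^+ cos(μ(t−x)) + σ^− cos(μ(x+t−π))) ψ_2(t,μ) q(t) dt − ∫_{π/2}^x sin(μ(t−x)) ψ_1(t,μ) p(t) dt + ∫_{π/2}^x cos(μ(t−x)) ψ_2(t,μ) q(t) dt. -/

import Mathlib

open Real MeasureTheory Set Filter Topology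

noncomputable section

/-- `V` is a real-valued function in the Sobolev space `W^{1,2}(0,π)`:
`V ∈ L²(0,π)` and `V` has a weak derivative `V' ∈ L²(0,π)`. -/
def SobolevW12 (V : ℝ → ℝ) : Prop :=
  MemLp V 2 (volume.restrict (Set.Ioo 0 π)) ∧
  ∃ V' : ℝ → ℝ, MemLp V' 2 (volume.restrict (Set.Ioo 0 π)) ∧
    ∀ x ∈ Set.Icc 0 π, V x = V 0 + ∫ t in (0:ℝ)..x, V' t

/-- `σ⁺ = (σ + σ⁻¹)/2`. -/
def sigmaP (σ : ℝ) : ℝ := (σ + σ⁻¹) / 2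

/-- `σ⁻ = (σ - σ⁻¹)/2`. -/
def sigmaM (σ : ℝ) : ℝ := (σ - σ⁻¹) / 2

/-- `ρ(x) = (1/2)∫₀ˣ (p+q) = ∫₀ˣ V(t) dt`. -/
def rho (V : ℝ → ℝ) (x : ℝ) : ℝ := ∫ t in (0:ℝ)..x, V t

/-- `ψ = (ψ1, ψ2)` is the solution of the Dirac system `B Y' + Ω Y = μ Y` on
`(0,π/2) ∪ (π/2,π)`, with `p = V + m`, `q = V - m`, initial condition
`ψ(0,μ) = (cos θ, -sin θ)ᵀ`, continuity up to `π/2` from the left and up to `π`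
from the right, and the jump conditions
`ψ1(π/2+0) = σ ψ1(π/2-0)`, `ψ2(π/2+0) = σ⁻¹ ψ2(π/2-0)`.
(The value at `x ≤ π/2` is the left branch, so `ψᵢ (π/2) μ = ψᵢ(π/2-0, μ)`.) -/
structure IsDiracSolution (V : ℝ → ℝ) (m θ σ : ℝ) (ψ1 ψ2 : ℝ → ℂ → ℂ) : Prop where
  init1 : ∀ μ : ℂ, ψ1 0 μ = Real.cos θ
  init2 : ∀ μ : ℂ, ψ2 0 μ = -Real.sin θ
  contLeft1 : ∀ μ : ℂ, ContinuousOn (fun x => ψ1 x μ) (Set.Icc 0 (π/2))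
  contLeft2 : ∀ μ : ℂ, ContinuousOn (fun x => ψ2 x μ) (Set.Icc 0 (π/2))
  contRight1 : ∀ μ : ℂ, ContinuousOn (fun x => ψ1 x μ) (Set.Ioc (π/2) π)
  contRight2 : ∀ μ : ℂ, ContinuousOn (fun x => ψ2 x μ) (Set.Ioc (π/2) π)
  hasDeriv1 : ∀ μ : ℂ, ∀ x ∈ Set.Ioo 0 (π/2) ∪ Set.Ioo (π/2) π,
      HasDerivAt (fun t => ψ1 t μ) ((((V x - m : ℝ) : ℂ) - μ) * ψ2 x μ) x
  hasDeriv2 : ∀ μ : ℂ, ∀ x ∈ Set.Ioo 0 (π/2) ∪ Set.Ioo (π/2) π,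
      HasDerivAt (fun t => ψ2 t μ) ((μ - ((V x + m : ℝ) : ℂ)) * ψ1 x μ) x
  jump1 : ∀ μ : ℂ, Tendsto (fun x => ψ1 x μ) (𝓝[>] (π/2)) (𝓝 ((σ : ℂ) * ψ1 (π/2) μ))
  jump2 : ∀ μ : ℂ, Tendsto (fun x => ψ2 x μ) (𝓝[>] (π/2)) (𝓝 ((σ : ℂ)⁻¹ * ψ2 (π/2) μ))

/-!
If `(C, S)` solves the unperturbed system `B Y' = μ Y` (that is `C' = -μ S`, `S' = μ C`), then
`(C ψ₁ + S ψ₂)' = C q ψ₂ - S p ψ₁`. Integrating this over `[π/2, x]` with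
`(C, S) = (cos μ(t - x), sin μ(t - x))`, and over `[0, π/2]` with
`σ⁺ (cos μ(t - x), sin μ(t - x)) + σ⁻ (cos μ(x + t - π), sin μ(x + t - π))`, turns every integral
of the equation into boundary values. The values at `π/2` cancel by the jump conditions, since
`σ⁺ + σ⁻ = σ` and `σ⁺ - σ⁻ = σ⁻¹`, and those at `0` are the initial data.
-/

open Function

lemma sigmaP_add_sigmaM (σ : ℝ) : sigmaP σ + sigmaM σ = σ := by
  unfold sigmaP sigmaM; ring

lemma sigmaP_sub_sigmaM (σ : ℝ) : sigmaP σ - sigmaM σ = σ⁻¹ := by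
  unfold sigmaP sigmaM; ring

lemma Complex.cos_mul_cos_sub_sin_mul_sin_of_eq_neg {z u : ℂ} (h : z = -u) (w : ℂ) :
    Complex.cos z * Complex.cos w - Complex.sin z * Complex.sin w = Complex.cos (u - w) := by
  rw [← Complex.cos_add, h, ← Complex.cos_neg]; ring_nf

lemma SobolevW12.continuousOn {V : ℝ → ℝ} (hV : SobolevW12 V) : ContinuousOn V (Icc 0 π) := by
  obtain ⟨-, V', hV'L2, hV_eq⟩ := hV
  have : IsFiniteMeasure (volume.restrict (Ioo 0 π)) := by
    rw [isFiniteMeasure_restrict, Real.volume_Ioo]; exact ENNReal.ofReal_ne_top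
  have hV'int : IntegrableOn V' (uIcc 0 π) := by
    rw [uIcc_of_le pi_pos.le, integrableOn_Icc_iff_integrableOn_Ioo]
    exact hV'L2.integrable one_le_two
  have hprim := intervalIntegral.continuousOn_primitive_interval hV'int
  rw [uIcc_of_le pi_pos.le] at hprim
  exact (continuousOn_const.add hprim).congr hV_eq

lemma continuousOn_update_Icc_of_tendsto {E : Type*} [TopologicalSpace E] {f : ℝ → E}
    {a b : ℝ} {L : E} (hf : ContinuousOn f (Ioc a b)) (hL : Tendsto f (𝓝[>] a) (𝓝 L)) :
    ContinuousOn (update f a L) (Icc a b) := by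
  refine continuousOn_update_iff.2 ⟨by rwa [Icc_sdiff_left], fun _ => ?_⟩
  rw [Icc_sdiff_left]
  exact hL.mono_left (nhdsWithin_mono _ Ioc_subset_Ioi_self)

/-- `(C, S)` solves the unperturbed system `B Y' = μ Y`. -/
def IsFreeDiracPair (μ : ℂ) (C S : ℝ → ℂ) : Prop :=
  ∀ t, HasDerivAt C (-(μ * S t)) t ∧ HasDerivAt S (μ * C t) t

namespace IsFreeDiracPair

variable {μ : ℂ} {C S C' S' : ℝ → ℂ}

lemma cos_sin {φ : ℝ → ℂ} (hφ : ∀ t, HasDerivAt φ μ t) :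
    IsFreeDiracPair μ (fun t => Complex.cos (φ t)) (fun t => Complex.sin (φ t)) := fun t =>
  ⟨((Complex.hasDerivAt_cos (φ t)).comp t (hφ t)).congr_deriv (by ring),
    ((Complex.hasDerivAt_sin (φ t)).comp t (hφ t)).congr_deriv (by ring)⟩

lemma const_mul (h : IsFreeDiracPair μ C S) (a : ℂ) :
    IsFreeDiracPair μ (fun t => a * C t) (fun t => a * S t) := fun t =>
  ⟨((h t).1.const_mul a).congr_deriv (by ring), ((h t).2.const_mul a).congr_deriv (by ring)⟩

lemma add (h : IsFreeDiracPair μ C S) (h' : IsFreeDiracPair μ C' S') :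
    IsFreeDiracPair μ (fun t => C t + C' t) (fun t => S t + S' t) := fun t =>
  ⟨((h t).1.add (h' t).1).congr_deriv (by ring), ((h t).2.add (h' t).2).congr_deriv (by ring)⟩

lemma continuous (h : IsFreeDiracPair μ C S) : Continuous C ∧ Continuous S :=
  ⟨continuous_iff_continuousAt.2 fun t => (h t).1.continuousAt,
    continuous_iff_continuousAt.2 fun t => (h t).2.continuousAt⟩

end IsFreeDiracPair

theorem integral_sub_integral_eq_of_isFreeDiracPair {μ : ℂ} {C S f₁ f₂ : ℝ → ℂ} {p q : ℝ → ℝ}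
    {l r : ℝ} (hlr : l ≤ r) (hCS : IsFreeDiracPair μ C S)
    (hf₁ : ContinuousOn f₁ (Icc l r)) (hf₂ : ContinuousOn f₂ (Icc l r))
    (hp : ContinuousOn p (Icc l r)) (hq : ContinuousOn q (Icc l r))
    (hf₁' : ∀ t ∈ Ioo l r, HasDerivAt f₁ (((q t : ℂ) - μ) * f₂ t) t)
    (hf₂' : ∀ t ∈ Ioo l r, HasDerivAt f₂ ((μ - (p t : ℂ)) * f₁ t) t) :
    (∫ t in l..r, C t * f₂ t * (q t : ℂ)) - (∫ t in l..r, S t * f₁ t * (p t : ℂ))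
      = (C r * f₁ r + S r * f₂ r) - (C l * f₁ l + S l * f₂ l) := by
  obtain ⟨hC, hS⟩ := hCS.continuous
  have hp' : ContinuousOn (fun t => (p t : ℂ)) (Icc l r) :=
    Complex.continuous_ofReal.comp_continuousOn hp
  have hq' : ContinuousOn (fun t => (q t : ℂ)) (Icc l r) :=
    Complex.continuous_ofReal.comp_continuousOn hq
  have integrable {g h : ℝ → ℂ} (hg : Continuous g) (hh : ContinuousOn h (Icc l r))
      {w : ℝ → ℂ} (hw : ContinuousOn w (Icc l r)) :
      IntervalIntegrable (fun t => g t * h t * w t) volume l r :=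
    ((hg.continuousOn.mul hh).mul hw).intervalIntegrable_of_Icc hlr
  rw [← intervalIntegral.integral_sub (integrable hC hf₂ hq') (integrable hS hf₁ hp')]
  refine intervalIntegral.integral_eq_sub_of_hasDerivAt_of_le hlr
    ((hC.continuousOn.mul hf₁).add (hS.continuousOn.mul hf₂)) (fun t ht => ?_)
    ((integrable hC hf₂ hq').sub (integrable hS hf₁ hp'))
  -- the `μ`-terms cancel between the two products
  exact ((((hCS t).1.mul (hf₁' t ht)).add ((hCS t).2.mul (hf₂' t ht)))).congr_deriv (by ring)

namespace IsDiracSolution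

variable {V : ℝ → ℝ} {m θ σ : ℝ} {ψ1 ψ2 : ℝ → ℂ → ℂ} {μ : ℂ} {C S : ℝ → ℂ}

lemma integral_sub_integral_left (hψ : IsDiracSolution V m θ σ ψ1 ψ2)
    (hCS : IsFreeDiracPair μ C S) (hV : ContinuousOn V (Icc 0 (π / 2))) :
    (∫ t in (0:ℝ)..π / 2, C t * ψ2 t μ * ((V t - m : ℝ) : ℂ))
        - (∫ t in (0:ℝ)..π / 2, S t * ψ1 t μ * ((V t + m : ℝ) : ℂ))
      = C (π / 2) * ψ1 (π / 2) μ + S (π / 2) * ψ2 (π / 2) μ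
        - (C 0 * Complex.cos θ - S 0 * Complex.sin θ) := by
  rw [integral_sub_integral_eq_of_isFreeDiracPair (p := fun t => V t + m)
    (q := fun t => V t - m) (by positivity) hCS (hψ.contLeft1 μ)
    (hψ.contLeft2 μ) (hV.add continuousOn_const) (hV.sub continuousOn_const)
    (fun t ht => hψ.hasDeriv1 μ t (Or.inl ht)) (fun t ht => hψ.hasDeriv2 μ t (Or.inl ht)),
    hψ.init1, hψ.init2]
  push_cast
  ring

lemma integral_sub_integral_right (hψ : IsDiracSolution V m θ σ ψ1 ψ2)
    (hCS : IsFreeDiracPair μ C S) {x : ℝ} (hx : x ∈ Ioc (π / 2) π)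
    (hV : ContinuousOn V (Icc (π / 2) x)) :
    (∫ t in π / 2..x, C t * ψ2 t μ * ((V t - m : ℝ) : ℂ))
        - (∫ t in π / 2..x, S t * ψ1 t μ * ((V t + m : ℝ) : ℂ))
      = C x * ψ1 x μ + S x * ψ2 x μ
        - (C (π / 2) * (σ * ψ1 (π / 2) μ) + S (π / 2) * ((σ : ℂ)⁻¹ * ψ2 (π / 2) μ)) := by
  -- on `[π/2, x]` the solution is continued to `π/2` by its right limits
  set g₁ := update (fun t => ψ1 t μ) (π / 2) (σ * ψ1 (π / 2) μ)
  set g₂ := update (fun t => ψ2 t μ) (π / 2) ((σ : ℂ)⁻¹ * ψ2 (π / 2) μ)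
  have hIoc : Ioc (π / 2) x ⊆ Ioc (π / 2) π := Ioc_subset_Ioc_right hx.2
  have hg₁ : ContinuousOn g₁ (Icc (π / 2) x) :=
    continuousOn_update_Icc_of_tendsto ((hψ.contRight1 μ).mono hIoc) (hψ.jump1 μ)
  have hg₂ : ContinuousOn g₂ (Icc (π / 2) x) :=
    continuousOn_update_Icc_of_tendsto ((hψ.contRight2 μ).mono hIoc) (hψ.jump2 μ)
  have hg₁_eq : ∀ t ∈ Ioc (π / 2) x, g₁ t = ψ1 t μ := fun t ht => update_of_ne ht.1.ne' _ _
  have hg₂_eq : ∀ t ∈ Ioc (π / 2) x, g₂ t = ψ2 t μ := fun t ht => update_of_ne ht.1.ne' _ _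
  have near {f : ℝ → ℂ} {L : ℂ} {t : ℝ} (ht : t ∈ Ioo (π / 2) x) :
      update f (π / 2) L =ᶠ[𝓝 t] f :=
    (update_eventuallyEq f _ L).filter_mono
      (le_principal_iff.2 (isOpen_compl_singleton.mem_nhds ht.1.ne'))
  have hmem {t : ℝ} (ht : t ∈ Ioo (π / 2) x) : t ∈ Ioo 0 (π / 2) ∪ Ioo (π / 2) π :=
    Or.inr ⟨ht.1, ht.2.trans_le hx.2⟩
  have key := integral_sub_integral_eq_of_isFreeDiracPair (p := fun t => V t + m)
    (q := fun t => V t - m) hx.1.le hCS hg₁ hg₂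
    (hV.add continuousOn_const) (hV.sub continuousOn_const)
    (fun t ht => by
      rw [hg₂_eq t (Ioo_subset_Ioc_self ht)]
      exact (hψ.hasDeriv1 μ t (hmem ht)).congr_of_eventuallyEq (near ht))
    (fun t ht => by
      rw [hg₁_eq t (Ioo_subset_Ioc_self ht)]
      exact (hψ.hasDeriv2 μ t (hmem ht)).congr_of_eventuallyEq (near ht))
  have integral_congr {u v : ℝ → ℂ} (huv : ∀ t ∈ Ioc (π / 2) x, u t = v t) (h w : ℝ → ℂ) :
      ∫ t in π / 2..x, h t * u t * w t = ∫ t in π / 2..x, h t * v t * w t :=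
    intervalIntegral.integral_congr_ae (.of_forall fun t ht => by
      rw [huv t (by rwa [uIoc_of_le hx.1.le] at ht)])
  rwa [integral_congr hg₁_eq, integral_congr hg₂_eq, hg₁_eq x ⟨hx.1, le_rfl⟩,
    hg₂_eq x ⟨hx.1, le_rfl⟩, show g₁ (π / 2) = _ from update_self ..,
    show g₂ (π / 2) = _ from update_self ..] at key

end IsDiracSolution

theorem dirac_integral_equation_psi1_right_general
    (V : ℝ → ℝ) (m θ σ : ℝ)
    (hV : SobolevW12 V)
    (ψ1 ψ2 : ℝ → ℂ → ℂ) (hψ : IsDiracSolution V m θ σ ψ1 ψ2)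
    (μ : ℂ) (x : ℝ) (hx : x ∈ Set.Ioo (π/2) π) :
    ψ1 x μ = (sigmaP σ : ℂ) * Complex.cos (μ * (x : ℂ) - (θ : ℂ))
      + (sigmaM σ : ℂ) * Complex.cos (μ * ((π : ℝ) - x : ℝ) - (θ : ℂ))
      - (∫ t in (0:ℝ)..(π/2),
          ((sigmaP σ : ℂ) * Complex.sin (μ * ((t : ℂ) - (x : ℂ)))
            + (sigmaM σ : ℂ) * Complex.sin (μ * ((x : ℂ) + (t : ℂ) - (π : ℂ))))
          * ψ1 t μ * ((V t + m : ℝ) : ℂ))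
      + (∫ t in (0:ℝ)..(π/2),
          ((sigmaP σ : ℂ) * Complex.cos (μ * ((t : ℂ) - (x : ℂ)))
            + (sigmaM σ : ℂ) * Complex.cos (μ * ((x : ℂ) + (t : ℂ) - (π : ℂ))))
          * ψ2 t μ * ((V t - m : ℝ) : ℂ))
      - (∫ t in (π/2)..x, Complex.sin (μ * ((t : ℂ) - (x : ℂ))) * ψ1 t μ * ((V t + m : ℝ) : ℂ))
      + (∫ t in (π/2)..x, Complex.cos (μ * ((t : ℂ) - (x : ℂ))) * ψ2 t μ * ((V t - m : ℝ) : ℂ)) := by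
  have hVc := hV.continuousOn
  have pair_sub := IsFreeDiracPair.cos_sin (φ := fun t : ℝ => μ * ((t : ℂ) - x)) fun t => by
    simpa using ((hasDerivAt_id t).ofReal_comp.sub_const (x : ℂ)).const_mul μ
  have pair_add := IsFreeDiracPair.cos_sin (φ := fun t : ℝ => μ * ((x : ℂ) + t - π)) fun t => by
    simpa using (((hasDerivAt_id t).ofReal_comp.const_add (x : ℂ)).sub_const (π : ℂ)).const_mul μ
  have hR := hψ.integral_sub_integral_right pair_sub ⟨hx.1, hx.2.le⟩
    (hVc.mono (Icc_subset_Icc (by positivity) hx.2.le))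
  have hL := hψ.integral_sub_integral_left
    ((pair_sub.const_mul (sigmaP σ)).add (pair_add.const_mul (sigmaM σ)))
    (hVc.mono (Icc_subset_Icc le_rfl (by linarith [pi_pos])))
  beta_reduce at hR hL
  have reflect : μ * ((x : ℂ) + (π / 2 : ℝ) - π) = -(μ * ((π / 2 : ℝ) - x)) := by push_cast; ring
  set a := μ * ((π / 2 : ℝ) - x : ℂ)
  rw [reflect, Complex.cos_neg, Complex.sin_neg] at hL
  have start_sub := Complex.cos_mul_cos_sub_sin_mul_sin_of_eq_neg
    (show μ * ((0 : ℝ) - x) = -(μ * x) by push_cast; ring) θ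
  have start_add := Complex.cos_mul_cos_sub_sin_mul_sin_of_eq_neg
    (show μ * ((x : ℂ) + (0 : ℝ) - π) = -(μ * ((π - x : ℝ) : ℂ)) by push_cast; ring) θ
  have hσ₁ : ((sigmaP σ : ℝ) : ℂ) + (sigmaM σ : ℝ) = σ := by exact_mod_cast sigmaP_add_sigmaM σ
  have hσ₂ : ((sigmaP σ : ℝ) : ℂ) - (sigmaM σ : ℝ) = (σ : ℂ)⁻¹ := by
    exact_mod_cast sigmaP_sub_sigmaM σ
  simp only [sub_self, mul_zero, Complex.cos_zero, Complex.sin_zero] at hR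
  linear_combination -hL - hR + (sigmaP σ : ℂ) * start_sub + (sigmaM σ : ℂ) * start_add
    - Complex.cos a * ψ1 (π / 2) μ * hσ₁ - Complex.sin a * ψ2 (π / 2) μ * hσ₂

/-- for `x > π/2`, the first component satisfies the integral equation
`ψ1(x,μ) = σ⁺ cos(μx-θ) + σ⁻ cos(μ(π-x)-θ)
  - ∫₀^{π/2} (σ⁺ sin(μ(t-x)) + σ⁻ sin(μ(x+t-π))) ψ1(t,μ) p(t) dt
  + ∫₀^{π/2} (σ⁺ cos(μ(t-x)) + σ⁻ cos(μ(x+t-π))) ψ2(t,μ) q(t) dt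
  - ∫_{π/2}^x sin(μ(t-x)) ψ1(t,μ) p(t) dt + ∫_{π/2}^x cos(μ(t-x)) ψ2(t,μ) q(t) dt`. -/
theorem dirac_integral_equation_psi1_right
    (V : ℝ → ℝ) (m θ β σ : ℝ)
    (hθ : θ ∈ Set.Ico 0 π) (hβ : β ∈ Set.Ico 0 π) (hσ : 0 < σ)
    (hV : SobolevW12 V) (hV0 : (∫ t in (0:ℝ)..π, V t) = 0)
    (ψ1 ψ2 : ℝ → ℂ → ℂ) (hψ : IsDiracSolution V m θ σ ψ1 ψ2)
    (μ : ℂ) (x : ℝ) (hx : x ∈ Set.Ioo (π/2) π) :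
    ψ1 x μ = (sigmaP σ : ℂ) * Complex.cos (μ * (x : ℂ) - (θ : ℂ))
      + (sigmaM σ : ℂ) * Complex.cos (μ * ((π : ℝ) - x : ℝ) - (θ : ℂ))
      - (∫ t in (0:ℝ)..(π/2),
          ((sigmaP σ : ℂ) * Complex.sin (μ * ((t : ℂ) - (x : ℂ)))
            + (sigmaM σ : ℂ) * Complex.sin (μ * ((x : ℂ) + (t : ℂ) - (π : ℂ))))
          * ψ1 t μ * ((V t + m : ℝ) : ℂ))
      + (∫ t in (0:ℝ)..(π/2),
          ((sigmaP σ : ℂ) * Complex.cos (μ * ((t : ℂ) - (x : ℂ)))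
            + (sigmaM σ : ℂ) * Complex.cos (μ * ((x : ℂ) + (t : ℂ) - (π : ℂ))))
          * ψ2 t μ * ((V t - m : ℝ) : ℂ))
      - (∫ t in (π/2)..x, Complex.sin (μ * ((t : ℂ) - (x : ℂ))) * ψ1 t μ * ((V t + m : ℝ) : ℂ))
      + (∫ t in (π/2)..x, Complex.cos (μ * ((t : ℂ) - (x : ℂ))) * ψ2 t μ * ((V t - m : ℝ) : ℂ)) :=
  dirac_integral_equation_psi1_right_general V m θ σ hV ψ1 ψ2 hψ μ x hx
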